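/- arXiv:2204.02503 — 2 statements merged into one kernel-verified Lean document; each statement's English description precedes it below -/
import Mathlib

section
/- Let k ≥ 1 and let S be a k-pseudomanifold. Then S is a simplicial k-circuit. -/
/-! ### Simplicial multicomplexes over the vertex type ℕ -/

/-- The vertex set of a simplicial multicomplex: the union of its simplices. -/
def vertexSet (S : Multiset (Finset ℕ)) : Finset ℕ := S.toFinset.sup id

lemma mem_vertexSet_of_mem {S : Multiset (Finset ℕ)} {U : Finset ℕ} {x : ℕ}
    (hU : U ∈ S) (hx : x ∈ U) : x ∈ vertexSet S :=
  Finset.mem_of_subset (Finset.le_sup (f := id) (Multiset.mem_toFinset.2 hU)) hx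

/-- The number of simplices of `S` containing `F`, counted with multiplicity. -/
def simplexCount (S : Multiset (Finset ℕ)) (F : Finset ℕ) : ℕ :=
  Multiset.countP (fun U => F ⊆ U) S

/-- `S` is a simplicial `k`-multicomplex: all its members are `(k+1)`-element sets. -/
def IsMultiComplex (k : ℕ) (S : Multiset (Finset ℕ)) : Prop :=
  ∀ U ∈ S, U.card = k + 1

/-- The boundary of `S`: all `k`-element sets lying in an odd number of simplices of `S`,
counted with multiplicity. -/
def boundarySet (k : ℕ) (S : Multiset (Finset ℕ)) : Set (Finset ℕ) :=
  {F | F.card = k ∧ Odd (simplexCount S F)}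

/-- A simplicial `k`-cycle: a simplicial `k`-multicomplex with empty boundary. -/
def IsSimpCycle (k : ℕ) (S : Multiset (Finset ℕ)) : Prop :=
  IsMultiComplex k S ∧ ∀ F : Finset ℕ, F.card = k → Even (simplexCount S F)

/-- A simplicial `k`-circuit: a nonempty simplicial `k`-cycle, no proper nonempty
sub-multiset of which is a simplicial `k`-cycle. -/
def IsSimpCircuit (k : ℕ) (S : Multiset (Finset ℕ)) : Prop :=
  IsSimpCycle k S ∧ S ≠ 0 ∧
    ∀ T : Multiset (Finset ℕ), T ≤ S → T ≠ 0 → T ≠ S → ¬ IsSimpCycle k T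

/-- A trivial simplicial circuit consists of two copies of a single simplex. -/
def IsTrivialSimpCircuit (S : Multiset (Finset ℕ)) : Prop :=
  ∃ U : Finset ℕ, S = {U, U}

/-- Symmetric difference of multisets (for multisets with no repeated members this is the
usual symmetric difference of sets). -/
def symmDiffM (S T : Multiset (Finset ℕ)) : Multiset (Finset ℕ) := (S - T) + (T - S)

/-- Contraction of the vertex `v` onto the vertex `u`: delete every simplex containing both
`u` and `v`, and replace every simplex `U` containing `v` but not `u` by `(U∖{v})∪{u}`. -/
def contractS (S : Multiset (Finset ℕ)) (u v : ℕ) : Multiset (Finset ℕ) :=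
  (S.filter fun U => ¬ (u ∈ U ∧ v ∈ U)).map fun U =>
    if v ∈ U then insert u (U.erase v) else U

/-- The link of an edge `uv` of `S`. -/
def linkS (S : Multiset (Finset ℕ)) (u v : ℕ) : Multiset (Finset ℕ) :=
  (S.filter fun U => u ∈ U ∧ v ∈ U).map fun U => U \ {u, v}

/-- `S` is strongly connected: any two simplices are joined by a sequence of simplices of `S`
in which consecutive simplices share at least `k` vertices. -/
def StronglyConnectedS (k : ℕ) (S : Multiset (Finset ℕ)) : Prop :=
  ∀ U ∈ S, ∀ W ∈ S,
    Relation.ReflTransGen (fun A B => A ∈ S ∧ B ∈ S ∧ k ≤ (A ∩ B).card) U W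

/-- A `k`-pseudomanifold: a nonempty strongly connected simplicial `k`-complex in which every
`k`-element subset of a simplex is contained in exactly two simplices. -/
def IsPseudomanifold (k : ℕ) (S : Multiset (Finset ℕ)) : Prop :=
  S.Nodup ∧ IsMultiComplex k S ∧ S ≠ 0 ∧ StronglyConnectedS k S ∧
    ∀ F : Finset ℕ, F.card = k → (∃ U ∈ S, F ⊆ U) → simplexCount S F = 2

/-- Stacked `k`-spheres: obtained from the boundary of a `(k+1)`-simplex by repeated
barycentric subdivisions of facets. -/
inductive IsStackedSphere : ℕ → Multiset (Finset ℕ) → Prop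
  | base (k : ℕ) (W : Finset ℕ) (hW : W.card = k + 2) :
      IsStackedSphere k (W.powersetCard (k + 1)).val
  | subdiv (k : ℕ) (S : Multiset (Finset ℕ)) (U : Finset ℕ) (w : ℕ)
      (hS : IsStackedSphere k S) (hU : U ∈ S) (hw : w ∉ vertexSet S) :
      IsStackedSphere k (symmDiffM S ((insert w U).powersetCard (k + 1)).val)

/-- `S` is a copy of the simplicial `k`-circuit `ℒ_k`. -/
def IsCopyOfL (k : ℕ) (S : Multiset (Finset ℕ)) : Prop :=
  ∃ (U : Finset ℕ) (x y : ℕ), U.card = k + 1 ∧ x ∉ U ∧ y ∉ U ∧ x ≠ y ∧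
    vertexSet S = U ∪ {x, y} ∧
    S = ((U.image fun w => insert x (U.erase w)) ∪ (U.image fun w => insert y (U.erase w))).val

open scoped Classical in
/-- The family `S†`: all `(k+1)`-element subsets `K` of `V(S)` containing `u` and `v` such
that both `K∖{u}` and `K∖{v}` are contained in some simplex of `S`. -/
noncomputable def faceDag (k : ℕ) (S : Multiset (Finset ℕ)) (u v : ℕ) : Multiset (Finset ℕ) :=
  ((vertexSet S).powersetCard (k + 1)).val.filter fun K =>
    u ∈ K ∧ v ∈ K ∧ (∃ U ∈ S, K.erase u ⊆ U) ∧ (∃ U ∈ S, K.erase v ⊆ U)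

open scoped Classical in
/-- The family `S*`: the members `K` of `S†` with `K∖{u}` and `K∖{v}` in the boundary of `S`. -/
noncomputable def faceStar (k : ℕ) (S : Multiset (Finset ℕ)) (u v : ℕ) : Multiset (Finset ℕ) :=
  (faceDag k S u v).filter fun K =>
    K.erase u ∈ boundarySet k S ∧ K.erase v ∈ boundarySet k S

/-! ### Finite graphs with vertices in ℕ -/

/-- A finite simple graph with vertex set a finite subset of `ℕ`. -/
structure FinGraph : Type where
  verts : Finset ℕ
  Adj : ℕ → ℕ → Prop
  symm : ∀ ⦃x y⦄, Adj x y → Adj y x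
  loopless : ∀ x, ¬ Adj x x
  adj_mem : ∀ ⦃x y⦄, Adj x y → x ∈ verts ∧ y ∈ verts

namespace FinGraph

/-- The number of edges of `G`. -/
noncomputable def edgeCount (G : FinGraph) : ℕ := (Sym2.fromRel (⟨fun _ _ h => G.symm h⟩ : Std.Symm G.Adj)).ncard

/-- `G` is connected. -/
def Connected (G : FinGraph) : Prop :=
  G.verts.Nonempty ∧ ∀ x ∈ G.verts, ∀ y ∈ G.verts, Relation.ReflTransGen G.Adj x y

/-- Deletion of a set of vertices. -/
def deleteVerts (G : FinGraph) (K : Finset ℕ) : FinGraph where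
  verts := G.verts \ K
  Adj x y := G.Adj x y ∧ x ∉ K ∧ y ∉ K
  symm := by
    rintro x y ⟨h, hx, hy⟩
    exact ⟨G.symm h, hy, hx⟩
  loopless := by
    rintro x ⟨h, -, -⟩
    exact G.loopless x h
  adj_mem := by
    rintro x y ⟨h, hx, hy⟩
    exact ⟨Finset.mem_sdiff.2 ⟨(G.adj_mem h).1, hx⟩, Finset.mem_sdiff.2 ⟨(G.adj_mem h).2, hy⟩⟩

/-- `G` is `m`-connected: it has at least `m+1` vertices and deleting any set of fewer than
`m` vertices leaves a connected graph. -/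
def ConnectedGE (m : ℕ) (G : FinGraph) : Prop :=
  m + 1 ≤ G.verts.card ∧ ∀ K : Finset ℕ, K.card < m → (G.deleteVerts K).Connected

/-- `G` is a complete graph on `n` vertices. -/
def IsCompleteOn (G : FinGraph) (n : ℕ) : Prop :=
  G.verts.card = n ∧ ∀ x ∈ G.verts, ∀ y ∈ G.verts, x ≠ y → G.Adj x y

/-- `H` is a subgraph of `G`. -/
def IsSubgraph (H G : FinGraph) : Prop :=
  H.verts ⊆ G.verts ∧ ∀ ⦃x y⦄, H.Adj x y → G.Adj x y

/-- `X` is a clique of `G`. -/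
def IsClique (G : FinGraph) (X : Finset ℕ) : Prop :=
  X ⊆ G.verts ∧ ∀ x ∈ X, ∀ y ∈ X, x ≠ y → G.Adj x y

/-- The union of two graphs. -/
def union (G H : FinGraph) : FinGraph where
  verts := G.verts ∪ H.verts
  Adj x y := G.Adj x y ∨ H.Adj x y
  symm := by
    rintro x y (h | h)
    exacts [Or.inl (G.symm h), Or.inr (H.symm h)]
  loopless := by
    rintro x (h | h)
    exacts [G.loopless x h, H.loopless x h]
  adj_mem := by
    rintro x y (h | h)
    · exact ⟨Finset.mem_union_left _ (G.adj_mem h).1, Finset.mem_union_left _ (G.adj_mem h).2⟩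
    · exact ⟨Finset.mem_union_right _ (H.adj_mem h).1, Finset.mem_union_right _ (H.adj_mem h).2⟩

/-- Adding the edge `uv` to `G` (for vertices `u ≠ v` of `G`). -/
def addEdge (G : FinGraph) (u v : ℕ) : FinGraph where
  verts := G.verts
  Adj x y := G.Adj x y ∨
    (x ≠ y ∧ x ∈ G.verts ∧ y ∈ G.verts ∧ ((x = u ∧ y = v) ∨ (x = v ∧ y = u)))
  symm := by
    rintro x y (h | ⟨hxy, hx, hy, h | h⟩)
    · exact Or.inl (G.symm h)
    · exact Or.inr ⟨hxy.symm, hy, hx, Or.inr ⟨h.2, h.1⟩⟩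
    · exact Or.inr ⟨hxy.symm, hy, hx, Or.inl ⟨h.2, h.1⟩⟩
  loopless := by
    rintro x (h | ⟨hxx, -⟩)
    · exact G.loopless x h
    · exact hxx rfl
  adj_mem := by
    rintro x y (h | ⟨-, hx, hy, -⟩)
    · exact G.adj_mem h
    · exact ⟨hx, hy⟩

/-- Adding a set `B` of unordered pairs of vertices to `G` as edges. -/
def addEdges (G : FinGraph) (B : Finset (Sym2 ℕ)) : FinGraph where
  verts := G.verts
  Adj x y := G.Adj x y ∨ (x ≠ y ∧ x ∈ G.verts ∧ y ∈ G.verts ∧ s(x, y) ∈ B)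
  symm := by
    rintro x y (h | ⟨hxy, hx, hy, hB⟩)
    · exact Or.inl (G.symm h)
    · exact Or.inr ⟨hxy.symm, hy, hx, by rwa [Sym2.eq_swap]⟩
  loopless := by
    rintro x (h | ⟨hxx, -⟩)
    · exact G.loopless x h
    · exact hxx rfl
  adj_mem := by
    rintro x y (h | ⟨-, hx, hy, -⟩)
    · exact G.adj_mem h
    · exact ⟨hx, hy⟩

/-- Deleting the edge `uv` from `G`. -/
def deleteEdge (G : FinGraph) (u v : ℕ) : FinGraph where
  verts := G.verts
  Adj x y := G.Adj x y ∧ ¬ ((x = u ∧ y = v) ∨ (x = v ∧ y = u))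
  symm := by
    rintro x y ⟨h, hne⟩
    refine ⟨G.symm h, fun hc => hne ?_⟩
    rcases hc with ⟨h1, h2⟩ | ⟨h1, h2⟩
    · exact Or.inr ⟨h2, h1⟩
    · exact Or.inl ⟨h2, h1⟩
  loopless := by
    rintro x ⟨h, -⟩
    exact G.loopless x h
  adj_mem := by
    rintro x y ⟨h, -⟩
    exact G.adj_mem h

/-- The contraction `G/uv`: delete `v` and join `u` to every former neighbour of `v`
other than `u`. -/
def contract (G : FinGraph) (u v : ℕ) : FinGraph where
  verts := G.verts.erase v
  Adj x y := x ≠ y ∧ x ∈ G.verts ∧ y ∈ G.verts ∧ x ≠ v ∧ y ≠ v ∧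
    (G.Adj x y ∨ (x = u ∧ G.Adj v y) ∨ (y = u ∧ G.Adj v x))
  symm := by
    rintro x y ⟨hxy, hx, hy, hxv, hyv, h⟩
    refine ⟨hxy.symm, hy, hx, hyv, hxv, ?_⟩
    rcases h with h | h | h
    · exact Or.inl (G.symm h)
    · exact Or.inr (Or.inr h)
    · exact Or.inr (Or.inl h)
  loopless := by
    rintro x ⟨hxx, -⟩
    exact hxx rfl
  adj_mem := by
    rintro x y ⟨hxy, hx, hy, hxv, hyv, -⟩
    exact ⟨Finset.mem_erase.2 ⟨hxv, hx⟩, Finset.mem_erase.2 ⟨hyv, hy⟩⟩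

/-! ### Rigidity notions -/

/-- A realisation of `G` in `ℝ^d` is generic if the coordinates of the positions of the
vertices of `G` are algebraically independent over `ℚ`. -/
def IsGeneric (d : ℕ) (G : FinGraph) (p : ℕ → EuclideanSpace ℝ (Fin d)) : Prop :=
  AlgebraicIndependent ℚ fun vi : {x // x ∈ G.verts} × Fin d => p vi.1.1 vi.2

/-- `q` is an infinitesimal motion of `(G, p)`. -/
def IsInfMotion (d : ℕ) (G : FinGraph) (p q : ℕ → EuclideanSpace ℝ (Fin d)) : Prop :=
  ∀ ⦃x y⦄, G.Adj x y → inner ℝ (q x - q y) (p x - p y) = (0 : ℝ)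

/-- `q` is a trivial motion of `(G, p)`: it agrees on the vertices of `G` with a map of the
form `v ↦ A (p v) + b` with `A` skew-symmetric. -/
def IsTrivialMotion (d : ℕ) (G : FinGraph) (p q : ℕ → EuclideanSpace ℝ (Fin d)) : Prop :=
  ∃ (A : EuclideanSpace ℝ (Fin d) →ₗ[ℝ] EuclideanSpace ℝ (Fin d))
    (b : EuclideanSpace ℝ (Fin d)),
      (∀ x y : EuclideanSpace ℝ (Fin d), (inner ℝ (A x) y : ℝ) = -(inner ℝ x (A y) : ℝ)) ∧
        ∀ v ∈ G.verts, q v = A (p v) + b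

/-- `(G, p)` is infinitesimally rigid. -/
def IsInfRigid (d : ℕ) (G : FinGraph) (p : ℕ → EuclideanSpace ℝ (Fin d)) : Prop :=
  ∀ q : ℕ → EuclideanSpace ℝ (Fin d), IsInfMotion d G p q → IsTrivialMotion d G p q

/-- `G` is rigid in `ℝ^d`: every generic realisation is infinitesimally rigid. -/
def IsRigid (d : ℕ) (G : FinGraph) : Prop :=
  ∀ p : ℕ → EuclideanSpace ℝ (Fin d), G.IsGeneric d p → G.IsInfRigid d p

/-- Two realisations are equivalent if corresponding edges have equal lengths. -/
def Equivalent (d : ℕ) (G : FinGraph) (p q : ℕ → EuclideanSpace ℝ (Fin d)) : Prop :=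
  ∀ ⦃x y⦄, G.Adj x y → ‖p x - p y‖ = ‖q x - q y‖

/-- Two realisations are congruent if all pairs of vertices are at equal distances. -/
def Congruent (d : ℕ) (G : FinGraph) (p q : ℕ → EuclideanSpace ℝ (Fin d)) : Prop :=
  ∀ x ∈ G.verts, ∀ y ∈ G.verts, ‖p x - p y‖ = ‖q x - q y‖

/-- `G` is globally rigid in `ℝ^d`. -/
def IsGloballyRigid (d : ℕ) (G : FinGraph) : Prop :=
  ∀ p q : ℕ → EuclideanSpace ℝ (Fin d),
    G.IsGeneric d p → G.Equivalent d p q → G.Congruent d p q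

/-- `G` is `uv`-coincident rigid in `ℝ^d`: some realisation with `p u = p v` is
infinitesimally rigid. -/
def IsCoincidentRigid (d : ℕ) (G : FinGraph) (u v : ℕ) : Prop :=
  ∃ p : ℕ → EuclideanSpace ℝ (Fin d), p u = p v ∧ G.IsInfRigid d p

end FinGraph

/-- The graph `G(S)` of a simplicial multicomplex `S`. -/
def graphOf (S : Multiset (Finset ℕ)) : FinGraph where
  verts := vertexSet S
  Adj x y := x ≠ y ∧ ∃ U ∈ S, x ∈ U ∧ y ∈ U
  symm := by
    rintro x y ⟨hxy, U, hU, hx, hy⟩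
    exact ⟨hxy.symm, U, hU, hy, hx⟩
  loopless := by
    rintro x ⟨hxx, -⟩
    exact hxx rfl
  adj_mem := by
    rintro x y ⟨hxy, U, hU, hx, hy⟩
    exact ⟨mem_vertexSet_of_mem hU hx, mem_vertexSet_of_mem hU hy⟩

/-! ### Cleavage properties -/

/-- The `d`-cleavage property: `G` is `d`-connected and every `d`-element vertex set whose
removal disconnects `G` induces a clique of `G`. -/
def HasCleavage (d : ℕ) (G : FinGraph) : Prop :=
  G.ConnectedGE d ∧ ∀ X : Finset ℕ, X ⊆ G.verts → X.card = d →
    ¬ (G.deleteVerts X).Connected → G.IsClique X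

/-- A `(d+1)`-block of `G`: a subgraph that is a complete graph on `d+1` vertices or is
`(d+1)`-connected, and is maximal among subgraphs of `G` with this property. -/
def IsBlock (d : ℕ) (G D : FinGraph) : Prop :=
  D.IsSubgraph G ∧ (D.IsCompleteOn (d + 1) ∨ D.ConnectedGE (d + 1)) ∧
    ∀ D' : FinGraph, D'.IsSubgraph G → (D'.IsCompleteOn (d + 1) ∨ D'.ConnectedGE (d + 1)) →
      D.IsSubgraph D' → D' = D

/-- The strong `d`-cleavage property (for `d ≥ 4`): the `d`-cleavage property, and every
`(d+1)`-block is globally rigid in `ℝ^d`. -/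
def HasStrongCleavage (d : ℕ) (G : FinGraph) : Prop :=
  HasCleavage d G ∧ ∀ D : FinGraph, IsBlock d G D → D.IsGloballyRigid d

/-!
A sub-cycle `T` of a pseudomanifold `S` is closed under adjacency: if `A ∈ T` and `B ∈ S ∖ T`
share a `k`-face `F`, then `F` lies in exactly one simplex of `T` (the two simplices of `S`
containing it are `A` and `B`), so `F` is in the boundary of `T`. Strong connectivity then
forces `T` to contain every simplex of `S`, and since `S` has no repeated simplices, `T = S`.
-/

lemma simplexCount_add (S T : Multiset (Finset ℕ)) (F : Finset ℕ) :
    simplexCount (S + T) F = simplexCount S F + simplexCount T F :=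
  Multiset.countP_add _ _ _

lemma IsPseudomanifold.simplexCount_eq_zero_or_two {k : ℕ} {S : Multiset (Finset ℕ)}
    (hS : IsPseudomanifold k S) {F : Finset ℕ} (hF : F.card = k) :
    simplexCount S F = 0 ∨ simplexCount S F = 2 := by
  by_cases hFS : ∃ U ∈ S, F ⊆ U
  · exact Or.inr (hS.2.2.2.2 F hF hFS)
  · exact Or.inl (Multiset.countP_eq_zero.2 fun U hU hFU => hFS ⟨U, hU, hFU⟩)

lemma IsPseudomanifold.isSimpCycle {k : ℕ} {S : Multiset (Finset ℕ)}
    (hS : IsPseudomanifold k S) : IsSimpCycle k S := by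
  refine ⟨hS.2.1, fun F hF => ?_⟩
  rcases hS.simplexCount_eq_zero_or_two hF with h | h <;> rw [h]
  exacts [Even.zero, even_two]

lemma IsSimpCycle.mem_of_adjacent {k : ℕ} {S T : Multiset (Finset ℕ)}
    (hS : ∀ F : Finset ℕ, F.card = k → simplexCount S F ≤ 2)
    (hT : IsSimpCycle k T) (hTS : T ≤ S) {A B : Finset ℕ} (hA : A ∈ T) (hB : B ∈ S)
    (hAB : k ≤ (A ∩ B).card) : B ∈ T := by
  classical
  by_contra hBT
  obtain ⟨F, hFAB, hF⟩ := Finset.exists_subset_card_eq hAB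
  have hB' : B ∈ S - T := Multiset.mem_sub.2 <| by
    rw [Multiset.count_eq_zero.2 hBT]
    exact Multiset.count_pos.2 hB
  have hFT : 0 < simplexCount T F :=
    Multiset.countP_pos_of_mem hA (hFAB.trans Finset.inter_subset_left)
  have hFST : 0 < simplexCount (S - T) F :=
    Multiset.countP_pos_of_mem hB' (hFAB.trans Finset.inter_subset_right)
  have hsum : simplexCount T F + simplexCount (S - T) F ≤ 2 := by
    rw [← simplexCount_add, add_tsub_cancel_of_le hTS]
    exact hS F hF
  have hone : simplexCount T F = 1 := by omega
  exact Nat.not_even_one (hone ▸ hT.2 F hF)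

lemma StronglyConnectedS.eq_of_closed {k : ℕ} {S T : Multiset (Finset ℕ)}
    (hS : StronglyConnectedS k S) (hnd : S.Nodup) (hTS : T ≤ S) (hT : T ≠ 0)
    (hclosed : ∀ A ∈ T, ∀ B ∈ S, k ≤ (A ∩ B).card → B ∈ T) : T = S := by
  obtain ⟨W, hW⟩ := Multiset.exists_mem_of_ne_zero hT
  refine le_antisymm hTS ((Multiset.le_iff_subset hnd).2 fun U hU => ?_)
  induction hS W (Multiset.mem_of_le hTS hW) U hU with
  | refl => exact hW
  | tail _ hAB ih => exact hclosed _ (ih hAB.1) _ hAB.2.1 hAB.2.2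

theorem pseudomanifold_isCircuit_general (k : ℕ)
    (S : Multiset (Finset ℕ)) (hS : IsPseudomanifold k S) :
    IsSimpCircuit k S := by
  have hcount : ∀ F : Finset ℕ, F.card = k → simplexCount S F ≤ 2 := fun F hF => by
    rcases hS.simplexCount_eq_zero_or_two hF with h | h <;> omega
  refine ⟨hS.isSimpCycle, hS.2.2.1, fun T hTS hT0 hTne hT => hTne ?_⟩
  exact hS.2.2.2.1.eq_of_closed hS.1 hTS hT0 fun A hA B hB hAB =>
    hT.mem_of_adjacent hcount hTS hA hB hAB

theorem pseudomanifold_isCircuit (k : ℕ) (hk : 1 ≤ k)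
    (S : Multiset (Finset ℕ)) (hS : IsPseudomanifold k S) :
    IsSimpCircuit k S :=
  pseudomanifold_isCircuit_general k S hS
end

section
/- Let k ≥ 1 and let S be a nonempty simplicial k-cycle with no repeated simplices such that |V(S)| = k+3. Say that S is a copy of ℒ_k if there exist a (k+1)-element set U and distinct vertices x, y not in U such that V(S) = U ∪ {x,y} and S = {(U∖{w})∪{x} : w ∈ U} ∪ {(U∖{w})∪{y} : w ∈ U}. Then: if k ≤ 2, S is a copy of ℒ_k; and if k ≥ 3, either G(S) is a complete graph on k+3 vertices or S is a copy of ℒ_k. -/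
/-!
Every simplex omits exactly two of the `k + 3` vertices, so `S` is encoded by the graph of
omitted pairs. The simplices containing the `k`-set `V(S) ∖ {a, b, c}` are those omitting a pair
inside `{a, b, c}`, so the cycle condition says that every triangle carries an even number of
edges of this graph; hence it is complete bipartite, with both sides of size at least two since
every vertex lies in a simplex. If one side is `{x, y}`, then `S` is `ℒ_k` with `U` the other
side; otherwise any two vertices avoid some omitted pair, so they are adjacent in `G(S)`.
-/

open Finset

lemma exists_mem_notMem_pair {α : Type*} [DecidableEq α] {s : Finset α} (hs : 2 < #s)
    (u v : α) : ∃ a ∈ s, a ∉ ({u, v} : Finset α) := by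
  by_contra! h
  exact (card_le_card h).trans card_le_two |>.not_gt hs

lemma even_card_filter_triple_iff {α : Type*} [DecidableEq α] (p : α → Prop) [DecidablePred p]
    {u v w : α} (huv : u ≠ v) (huw : u ≠ w) (hvw : v ≠ w) :
    Even #(({u, v, w} : Finset α).filter p) ↔ (p w ↔ Xor (p u) (p v)) := by
  rw [card_filter, sum_insert (by simp [huv, huw]), sum_insert (by simp [hvw]), sum_singleton]
  by_cases hu : p u <;> by_cases hv : p v <;> by_cases hw : p w <;> simp [hu, hv, hw, Nat.odd_iff]

theorem SimpleGraph.adj_iff_xor_of_triangle {α : Type*} (G : SimpleGraph α) {V : Set α}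
    (htri : ∀ a ∈ V, ∀ b ∈ V, ∀ c ∈ V, a ≠ b → b ≠ c → a ≠ c →
      (G.Adj a c ↔ Xor (G.Adj a b) (G.Adj b c)))
    {x a c : α} (hx : x ∈ V) (ha : a ∈ V) (hc : c ∈ V) (hac : a ≠ c) :
    G.Adj a c ↔ Xor (G.Adj x a) (G.Adj x c) := by
  by_cases hxa : x = a
  · subst hxa; simp
  by_cases hxc : x = c
  · subst hxc; simp [G.adj_comm, xor_comm _ False]
  rw [htri a ha x hx c hc (Ne.symm hxa) hxc hac, G.adj_comm a x]

variable {k : ℕ} {S : Multiset (Finset ℕ)}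

lemma exists_mem_of_mem_vertexSet {v : ℕ} (hv : v ∈ vertexSet S) : ∃ U ∈ S, v ∈ U := by
  simpa [vertexSet, Finset.mem_sup, Multiset.mem_toFinset] using hv

lemma subset_vertexSet_of_mem {U : Finset ℕ} (hU : U ∈ S) : U ⊆ vertexSet S :=
  fun _ hx => mem_vertexSet_of_mem hU hx

lemma IsMultiComplex.exists_eq_vertexSet_sdiff_pair (hS : IsMultiComplex k S)
    (hcard : #(vertexSet S) = k + 3) {U : Finset ℕ} (hU : U ∈ S) :
    ∃ x ∈ vertexSet S, ∃ y ∈ vertexSet S, x ≠ y ∧ U = vertexSet S \ {x, y} := by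
  have hUV := subset_vertexSet_of_mem hU
  have hcompl : #(vertexSet S \ U) = 2 := by
    rw [card_sdiff_of_subset hUV, hcard, hS U hU]; omega
  obtain ⟨x, y, hxy, hP⟩ := card_eq_two.1 hcompl
  have hPV : {x, y} ⊆ vertexSet S := hP ▸ sdiff_subset
  exact ⟨x, hPV (by simp), y, hPV (by simp), hxy, by rw [← hP, Finset.sdiff_sdiff_eq_self hUV]⟩

lemma IsMultiComplex.sdiff_triple_subset_iff (hS : IsMultiComplex k S)
    (hcard : #(vertexSet S) = k + 3) {a b c : ℕ} (ha : a ∈ vertexSet S) (hb : b ∈ vertexSet S)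
    (hc : c ∈ vertexSet S) {U : Finset ℕ} (hU : U ∈ S) :
    vertexSet S \ {a, b, c} ⊆ U ↔
      U ∈ ({vertexSet S \ {a, b}, vertexSet S \ {b, c}, vertexSet S \ {a, c}} : Finset _) := by
  obtain ⟨x, hx, y, hy, hxy, rfl⟩ := hS.exists_eq_vertexSet_sdiff_pair hcard hU
  have hpair : ∀ {p q : ℕ}, p ∈ vertexSet S → q ∈ vertexSet S → {p, q} ⊆ vertexSet S :=
    fun hp hq => insert_subset hp (singleton_subset_iff.2 hq)
  constructor
  · rw [sdiff_subset_sdiff_iff_subset (insert_subset ha (hpair hb hc)) (hpair hx hy)]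
    intro h
    have hx' := h (mem_insert_self x {y})
    have hy' := h (mem_insert_of_mem (mem_singleton_self y))
    simp only [mem_insert, mem_singleton] at hx' hy'
    rcases hx' with rfl | rfl | rfl <;> rcases hy' with rfl | rfl | rfl <;> simp_all [pair_comm]
  · intro h
    simp only [mem_insert, mem_singleton] at h
    rcases h with h | h | h <;> rw [h] <;> exact sdiff_subset_sdiff le_rfl (by simp [subset_iff])

lemma IsMultiComplex.simplexCount_sdiff_triple (hS : IsMultiComplex k S) (hnodup : S.Nodup)
    (hcard : #(vertexSet S) = k + 3) {a b c : ℕ} (ha : a ∈ vertexSet S) (hb : b ∈ vertexSet S)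
    (hc : c ∈ vertexSet S) :
    simplexCount S (vertexSet S \ {a, b, c}) =
      #(({vertexSet S \ {a, b}, vertexSet S \ {b, c}, vertexSet S \ {a, c}} : Finset _).filter
        (· ∈ S)) := by
  rw [simplexCount, Multiset.countP_eq_card_filter, ← card_val]
  congr 1
  refine (Multiset.Nodup.ext (hnodup.filter _) (nodup _)).2 fun U => ?_
  rw [Multiset.mem_filter, mem_val, mem_filter]
  exact ⟨fun ⟨hU, hsub⟩ => ⟨(hS.sdiff_triple_subset_iff hcard ha hb hc hU).1 hsub, hU⟩,
    fun ⟨hT, hU⟩ => ⟨hU, (hS.sdiff_triple_subset_iff hcard ha hb hc hU).2 hT⟩⟩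

def omittedPairGraph (S : Multiset (Finset ℕ)) : SimpleGraph ℕ where
  Adj x y := x ≠ y ∧ vertexSet S \ {x, y} ∈ S
  symm := ⟨fun x y h => ⟨h.1.symm, pair_comm x y ▸ h.2⟩⟩
  loopless := ⟨fun _ h => h.1 rfl⟩

lemma omittedPairGraph_adj {x y : ℕ} (hxy : x ≠ y) :
    (omittedPairGraph S).Adj x y ↔ vertexSet S \ {x, y} ∈ S :=
  and_iff_right hxy

lemma IsSimpCycle.omittedPairGraph_adj_iff_xor (hS : IsSimpCycle k S) (hnodup : S.Nodup)
    (hcard : #(vertexSet S) = k + 3) {a b c : ℕ} (ha : a ∈ vertexSet S) (hb : b ∈ vertexSet S)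
    (hc : c ∈ vertexSet S) (hab : a ≠ b) (hbc : b ≠ c) (hac : a ≠ c) :
    (omittedPairGraph S).Adj a c ↔
      Xor ((omittedPairGraph S).Adj a b) ((omittedPairGraph S).Adj b c) := by
  have hF : #(vertexSet S \ {a, b, c}) = k := by
    rw [card_sdiff_of_subset (by simp [insert_subset_iff, ha, hb, hc]), hcard,
      card_insert_of_notMem (by simp [hab, hac]), card_pair hbc]
    omega
  have hne : ∀ {P Q : Finset ℕ} {r : ℕ}, r ∈ vertexSet S → r ∉ P → r ∈ Q →
      vertexSet S \ P ≠ vertexSet S \ Q :=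
    fun hr hP hQ h => (mem_sdiff.1 (h ▸ mem_sdiff.2 ⟨hr, hP⟩)).2 hQ
  have heven := hS.2 _ hF
  rw [hS.1.simplexCount_sdiff_triple hnodup hcard ha hb hc,
    even_card_filter_triple_iff _ (hne hc (by simp [hac.symm, hbc.symm]) (by simp))
      (hne hc (by simp [hac.symm, hbc.symm]) (by simp)) (hne ha (by simp [hab, hac]) (by simp))]
    at heven
  simpa only [omittedPairGraph_adj hab, omittedPairGraph_adj hbc, omittedPairGraph_adj hac]
    using heven

def IsCutComplement (S : Multiset (Finset ℕ)) (A : Finset ℕ) : Prop :=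
  A ⊆ vertexSet S ∧ ∀ Z, Z ∈ S ↔ ∃ a ∈ A, ∃ b ∈ vertexSet S \ A, Z = vertexSet S \ {a, b}

theorem IsSimpCycle.exists_isCutComplement (hS : IsSimpCycle k S) (hnodup : S.Nodup)
    (hcard : #(vertexSet S) = k + 3) : ∃ A, IsCutComplement S A := by
  classical
  set G := omittedPairGraph S
  obtain ⟨x₀, hx₀⟩ : (vertexSet S).Nonempty := by rw [← card_pos, hcard]; omega
  have hcut : ∀ {a c : ℕ}, a ∈ vertexSet S → c ∈ vertexSet S → a ≠ c →
      (G.Adj a c ↔ Xor (G.Adj x₀ a) (G.Adj x₀ c)) :=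
    G.adj_iff_xor_of_triangle (V := vertexSet S)
      (fun _ ha _ hb _ hc => hS.omittedPairGraph_adj_iff_xor hnodup hcard ha hb hc) hx₀
  refine ⟨(vertexSet S).filter (¬ G.Adj x₀ ·), filter_subset _ _, fun Z => ⟨fun hZ => ?_, ?_⟩⟩
  · obtain ⟨x, hx, y, hy, hxy, rfl⟩ := hS.1.exists_eq_vertexSet_sdiff_pair hcard hZ
    rcases (hcut hx hy hxy).1 ⟨hxy, hZ⟩ with ⟨hx₀x, hx₀y⟩ | ⟨hx₀y, hx₀x⟩
    · exact ⟨y, by simp [hy, hx₀y], x, by simp [hx, hx₀x], by rw [pair_comm]⟩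
    · exact ⟨x, by simp [hx, hx₀x], y, by simp [hy, hx₀y], rfl⟩
  · rintro ⟨a, ha, b, hb, rfl⟩
    simp only [mem_filter, mem_sdiff, not_and, not_not] at ha hb
    have hab : a ≠ b := by rintro rfl; exact ha.2 (hb.2 ha.1)
    exact ((hcut ha.1 hb.1 hab).2 (.inr ⟨hb.2 hb.1, ha.2⟩)).2

lemma sdiff_pair_eq_insert_erase {α : Type*} [DecidableEq α] {V : Finset α} {x y w : α}
    (hy : y ∈ V) (hxy : x ≠ y) (hw : w ∈ V \ {x, y}) :
    V \ {x, w} = insert y ((V \ {x, y}).erase w) := by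
  ext z
  simp only [mem_sdiff, mem_insert, mem_singleton, mem_erase] at hw ⊢
  grind

namespace IsCutComplement

variable {A : Finset ℕ} (hA : IsCutComplement S A)
include hA

lemma compl : IsCutComplement S (vertexSet S \ A) := by
  refine ⟨sdiff_subset, fun Z => ?_⟩
  rw [hA.2, Finset.sdiff_sdiff_eq_self hA.1]
  constructor <;> rintro ⟨a, ha, b, hb, rfl⟩ <;> exact ⟨b, hb, a, ha, by rw [pair_comm]⟩

lemma two_le_card (hV : (vertexSet S).Nonempty) : 2 ≤ #A := by
  obtain ⟨v, hv⟩ := hV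
  obtain ⟨U₀, hU₀, -⟩ := exists_mem_of_mem_vertexSet hv
  obtain ⟨a, ha, -⟩ := (hA.2 U₀).1 hU₀
  obtain ⟨U, hU, haU⟩ := exists_mem_of_mem_vertexSet (hA.1 ha)
  obtain ⟨a', ha', b', -, rfl⟩ := (hA.2 U).1 hU
  have : a ≠ a' := by rintro rfl; simp at haU
  exact one_lt_card_iff.2 ⟨a, a', ha, ha', this⟩

lemma isCopyOfL (hnodup : S.Nodup) (hcard : #(vertexSet S) = k + 3) (h2 : #A = 2) :
    IsCopyOfL k S := by
  obtain ⟨x, y, hxy, rfl⟩ := card_eq_two.1 h2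
  have hx : x ∈ vertexSet S := hA.1 (by simp)
  have hy : y ∈ vertexSet S := hA.1 (by simp)
  refine ⟨vertexSet S \ {x, y}, x, y, ?_, by simp, by simp, hxy,
    (sdiff_union_of_subset hA.1).symm, ?_⟩
  · rw [card_sdiff_of_subset hA.1, hcard, h2]; omega
  have hxw {w} (hw : w ∈ vertexSet S \ {x, y}) := sdiff_pair_eq_insert_erase hy hxy hw
  have hyw {w} (hw : w ∈ vertexSet S \ {x, y}) : vertexSet S \ {y, w} =
      insert x ((vertexSet S \ {x, y}).erase w) := by
    rw [pair_comm x y] at hw ⊢; exact sdiff_pair_eq_insert_erase hx hxy.symm hw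
  refine (Multiset.Nodup.ext hnodup (nodup _)).2 fun Z => ?_
  rw [hA.2, mem_val, mem_union, mem_image, mem_image]
  constructor
  · rintro ⟨a, ha, b, hb, rfl⟩
    simp only [mem_insert, mem_singleton] at ha
    rcases ha with rfl | rfl
    · exact .inr ⟨b, hb, (hxw hb).symm⟩
    · exact .inl ⟨b, hb, (hyw hb).symm⟩
  · rintro (⟨b, hb, rfl⟩ | ⟨b, hb, rfl⟩)
    · exact ⟨y, by simp, b, hb, (hyw hb).symm⟩
    · exact ⟨x, by simp, b, hb, (hxw hb).symm⟩

lemma isCompleteOn (hcard : #(vertexSet S) = k + 3) (hA3 : 3 ≤ #A)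
    (hB3 : 3 ≤ #(vertexSet S \ A)) : (graphOf S).IsCompleteOn (k + 3) := by
  refine ⟨hcard, fun u hu v hv huv => ?_⟩
  obtain ⟨a, ha, hauv⟩ := exists_mem_notMem_pair hA3 u v
  obtain ⟨b, hb, hbuv⟩ := exists_mem_notMem_pair hB3 u v
  simp only [mem_insert, mem_singleton] at hauv hbuv
  refine ⟨huv, _, (hA.2 _).2 ⟨a, ha, b, hb, rfl⟩, mem_sdiff.2 ⟨hu, ?_⟩, mem_sdiff.2 ⟨hv, ?_⟩⟩ <;>
    simp only [mem_insert, mem_singleton] <;> omega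

end IsCutComplement

theorem cycle_on_k_plus_three_vertices_general (k : ℕ)
    (S : Multiset (Finset ℕ)) (hS : IsSimpCycle k S) (hnodup : S.Nodup)
    (hcard : (vertexSet S).card = k + 3) :
    (k ≤ 2 → IsCopyOfL k S) ∧
      (3 ≤ k → (graphOf S).IsCompleteOn (k + 3) ∨ IsCopyOfL k S) := by
  obtain ⟨A, hA⟩ := hS.exists_isCutComplement hnodup hcard
  have hV : (vertexSet S).Nonempty := by rw [← card_pos, hcard]; omega
  have hA2 := hA.two_le_card hV
  have hB2 := hA.compl.two_le_card hV
  have hcardB : #(vertexSet S \ A) = k + 3 - #A := by rw [card_sdiff_of_subset hA.1, hcard]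
  have hcopy : #A = 2 ∨ #(vertexSet S \ A) = 2 → IsCopyOfL k S := by
    rintro (h | h)
    exacts [hA.isCopyOfL hnodup hcard h, hA.compl.isCopyOfL hnodup hcard h]
  refine ⟨fun hk => hcopy (by omega), fun _ => ?_⟩
  by_cases h : #A = 2 ∨ #(vertexSet S \ A) = 2
  · exact .inr (hcopy h)
  · exact .inl (hA.isCompleteOn hcard (by omega) (by omega))

theorem cycle_on_k_plus_three_vertices (k : ℕ) (hk : 1 ≤ k)
    (S : Multiset (Finset ℕ)) (hS : IsSimpCycle k S) (hne : S ≠ 0) (hnodup : S.Nodup)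
    (hcard : (vertexSet S).card = k + 3) :
    (k ≤ 2 → IsCopyOfL k S) ∧
      (3 ≤ k → (graphOf S).IsCompleteOn (k + 3) ∨ IsCopyOfL k S) :=
  cycle_on_k_plus_three_vertices_general k S hS hnodup hcard
end
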